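/- arXiv:2103.16966 — 3 statements merged into one kernel-verified Lean document; each statement's English description precedes it below -/
import Mathlib

section
/- Let S = (L,A,<) be an abstract numeration system built on an infinite prefix-closed regular language L (accepted by a DFA with finitely many states), let R be a commutative Noetherian ring, M an R-module, and x : ℕ → M an (R,S)-regular sequence. Define the cumulative version y : ℕ → M of x by y(n) = Σ_{u ∈ Pref(rep_S(n))} x(val_S(u)), the sum over all prefixes u of rep_S(n) (including the empty word and rep_S(n) itself). Then y is (R,S)-regular. -/
open scoped Classical

def PrefixClosed {A : Type*} (L : Set (List A)) : Prop :=
  ∀ u v : List A, u ++ v ∈ L → u ∈ L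

/-- The domain of the factor of height `h` of the tree `T(L)` rooted at `w`:
the set of words `v` with `|v| ≤ h` and `wv ∈ L`. -/
def Dset {A : Type*} (L : Set (List A)) (h : ℕ) (w : List A) : Set (List A) :=
  {v | v.length ≤ h ∧ w ++ v ∈ L}

/-- Radix order on words: shorter words come first, words of equal length are
compared lexicographically. -/
def radixLt {A : Type*} [LinearOrder A] (u v : List A) : Prop :=
  u.length < v.length ∨ (u.length = v.length ∧ List.Lex (· < ·) u v)

/-- `valS L w` is the number of words of `L` that are smaller than `w` in radix order. -/
noncomputable def valS {A : Type*} [LinearOrder A] (L : Set (List A)) (w : List A) : ℕ :=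
  {v | v ∈ L ∧ radixLt v w}.ncard

/-- The kernel sequence `τ(x,u)`: `τ(x,u)(n) = x(val_S(rep_S(n)·u))` if
`rep_S(n)·u ∈ L`, and `0` otherwise. -/
noncomputable def tauS {A : Type*} [LinearOrder A] {M : Type*} [Zero M]
    (L : Set (List A)) (rep : ℕ → List A) (x : ℕ → M) (u : List A) : ℕ → M :=
  fun n => if rep n ++ u ∈ L then x (valS L (rep n ++ u)) else 0

/-- The `S`-kernel of `x`: the set of sequences `τ(x,u)` for `u ∈ A*`. -/
def SKernel {A : Type*} [LinearOrder A] {M : Type*} [Zero M]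
    (L : Set (List A)) (rep : ℕ → List A) (x : ℕ → M) : Set (ℕ → M) :=
  {y | ∃ u : List A, y = tauS L rep x u}

/-- `L` is accepted by a deterministic finite automaton with finitely many states. -/
def IsRegularLang {A : Type*} (L : Set (List A)) : Prop :=
  ∃ (Q : Type) (_ : Fintype Q) (dfa : DFA A Q), ∀ w, w ∈ dfa.accepts ↔ w ∈ L

section Aux

variable {A : Type*} [Fintype A] [LinearOrder A]

lemma radixLt_irrefl (u : List A) : ¬ radixLt u u := by
  have hi : IsIrrefl (List A) (List.Lex (· < ·)) := inferInstance
  rintro (h | ⟨-, h⟩)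
  · exact lt_irrefl _ h
  · exact hi.irrefl u h

lemma radixLt_trans {u v w : List A} (h1 : radixLt u v) (h2 : radixLt v w) : radixLt u w := by
  rcases h1 with h1 | ⟨e1, l1⟩ <;> rcases h2 with h2 | ⟨e2, l2⟩
  · exact Or.inl (h1.trans h2)
  · exact Or.inl (e2 ▸ h1)
  · exact Or.inl (e1 ▸ h2)
  · have ht : IsTrans (List A) (List.Lex (· < ·)) := ⟨fun _ _ _ h1 h2 => List.lex_trans lt_trans h1 h2⟩
    exact Or.inr ⟨e1.trans e2, ht.trans _ _ _ l1 l2⟩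

lemma radixLt_total {u v : List A} (h : u ≠ v) : radixLt u v ∨ radixLt v u := by
  rcases Nat.lt_trichotomy u.length v.length with hl | hl | hl
  · exact Or.inl (Or.inl hl)
  · have ht : IsTrichotomous (List A) (List.Lex (· < ·)) := inferInstance
    rcases trichotomous (r := List.Lex (· < ·)) u v with hx | hx | hx
    · exact Or.inl (Or.inr ⟨hl, hx⟩)
    · exact absurd hx h
    · exact Or.inr (Or.inr ⟨hl.symm, hx⟩)
  · exact Or.inr (Or.inl hl)

lemma radixLt_len_le {u v : List A} (h : radixLt u v) : u.length ≤ v.length := by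
  rcases h with h | ⟨h, -⟩
  · exact h.le
  · exact h.le

lemma valS_finite (L : Set (List A)) (w : List A) :
    {v | v ∈ L ∧ radixLt v w}.Finite :=
  (List.finite_length_le A w.length).subset fun v hv => radixLt_len_le hv.2

lemma valS_strictMono (L : Set (List A)) {v w : List A} (hv : v ∈ L) (h : radixLt v w) :
    valS L v < valS L w := by
  apply Set.ncard_lt_ncard _ (valS_finite L w)
  constructor
  · exact fun p hp => ⟨hp.1, radixLt_trans hp.2 h⟩
  · intro hsub
    exact radixLt_irrefl v (hsub ⟨hv, h⟩).2

lemma valS_injOn (L : Set (List A)) {v w : List A} (hv : v ∈ L) (hw : w ∈ L)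
    (h : valS L v = valS L w) : v = w := by
  by_contra hne
  rcases radixLt_total hne with ht | ht
  · exact absurd h (valS_strictMono L hv ht).ne
  · exact absurd h.symm (valS_strictMono L hw ht).ne

lemma rep_valS (L : Set (List A)) (rep : ℕ → List A)
    (hrep : ∀ n, rep n ∈ L) (hval : ∀ n, valS L (rep n) = n)
    {w : List A} (hw : w ∈ L) : rep (valS L w) = w :=
  valS_injOn L (hrep _) hw (hval _)

lemma list_sum_apply {M : Type*} [AddCommMonoid M] (l : List (ℕ → M)) (n : ℕ) :
    l.sum n = (l.map (fun f => f n)).sum := by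
  induction l with
  | nil => rfl
  | cons a t ih => simp [List.sum_cons, ih]

end Aux

theorem statement16 {A : Type*} [Fintype A] [LinearOrder A] (L : Set (List A))
    (hinf : L.Infinite) (hpc : PrefixClosed L) (hreg : IsRegularLang L)
    (R : Type*) [CommRing R] [IsNoetherianRing R]
    (M : Type*) [AddCommMonoid M] [Module R M]
    (x : ℕ → M) (rep : ℕ → List A)
    (hrep : ∀ n, rep n ∈ L) (hval : ∀ n, valS L (rep n) = n)
    (hx : (Submodule.span R (SKernel L rep x)).FG) :
    (Submodule.span R (SKernel L rep
      (fun n => ((rep n).inits.map (fun u => x (valS L u))).sum))).FG := by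
  obtain ⟨Q, fQ, dfa, hdfa⟩ := hreg
  letI := fQ
  set y : ℕ → M := fun n => ((rep n).inits.map (fun u => x (valS L u))).sum with hy
  obtain ⟨T, hT⟩ := hx
  -- the "state projection" linear maps
  have phi_def : ∀ (q : Q) (z : ℕ → M) (n : ℕ), True := fun _ _ _ => trivial
  let phi : Q → (ℕ → M) →ₗ[R] (ℕ → M) := fun q =>
    { toFun := fun z n => if dfa.eval (rep n) = q then z n else 0
      map_add' := by
        intro z w; funext n; by_cases h : dfa.eval (rep n) = q <;> simp [h]
      map_smul' := by
        intro r z; funext n; by_cases h : dfa.eval (rep n) = q <;> simp [h] }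
  have phi_apply : ∀ (q : Q) (z : ℕ → M) (n : ℕ),
      phi q z n = if dfa.eval (rep n) = q then z n else 0 := fun _ _ _ => rfl
  -- the finitely generated ambient submodule
  set G : Set (ℕ → M) := (⋃ q : Q, phi q '' (T : Set (ℕ → M))) ∪ Set.range (fun q => phi q y)
    with hG
  set N : Submodule R (ℕ → M) := Submodule.span R G with hN
  have hGfin : G.Finite :=
    ((Set.finite_iUnion fun q => T.finite_toSet.image _)).union (Set.finite_range _)
  have hNfg : N.FG := Submodule.fg_span hGfin
  have hmemK : ∀ u', tauS L rep x u' ∈ Submodule.span R (SKernel L rep x) :=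
    fun u' => Submodule.subset_span ⟨u', rfl⟩
  have hphiK : ∀ (q : Q) (z : ℕ → M), z ∈ Submodule.span R (SKernel L rep x) →
      phi q z ∈ N := by
    intro q z hz
    have h1 : phi q z ∈ Submodule.map (phi q) (Submodule.span R (SKernel L rep x)) :=
      ⟨z, hz, rfl⟩
    rw [← hT, Submodule.map_span] at h1
    refine Submodule.span_mono ?_ h1
    exact fun w hw => Or.inl (Set.mem_iUnion.mpr ⟨q, hw⟩)
  have hphiy : ∀ q : Q, phi q y ∈ N :=
    fun q => Submodule.subset_span (Or.inr ⟨q, rfl⟩)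
  -- main claim: every kernel sequence of y lies in N
  have key : ∀ u : List A, tauS L rep y u ∈ N := by
    intro u
    have hdecomp : tauS L rep y u = ∑ q : Q,
        (if dfa.evalFrom q u ∈ dfa.accept then
          phi q y + ((u.inits.tail).map (fun u' => phi q (tauS L rep x u'))).sum
        else 0) := by
      funext n
      rw [Finset.sum_apply]
      rw [Finset.sum_eq_single (dfa.eval (rep n))]
      · -- the surviving term
        by_cases hacc : dfa.evalFrom (dfa.eval (rep n)) u ∈ dfa.accept
        · have hL : rep n ++ u ∈ L := by
            rw [← hdfa, DFA.mem_accepts]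
            show dfa.evalFrom dfa.start (rep n ++ u) ∈ dfa.accept
            rw [DFA.evalFrom_of_append]
            exact hacc
          have hrepv : rep (valS L (rep n ++ u)) = rep n ++ u :=
            rep_valS L rep hrep hval hL
          have hLHS : tauS L rep y u n = ((rep n ++ u).inits.map
              (fun p => x (valS L p))).sum := by
            simp only [tauS, if_pos hL, hy, hrepv]
          rw [hLHS, if_pos hacc]
          rw [List.inits_append, List.map_append, List.sum_append, List.map_map]
          simp only [Pi.add_apply]
          congr 1
          · rw [phi_apply, if_pos rfl]
          · rw [list_sum_apply, List.map_map]
            apply congrArg List.sum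
            apply List.map_congr_left
            intro u' hu'
            have hpre : u' <+: u := (List.mem_inits u' u).mp (List.mem_of_mem_tail hu')
            obtain ⟨t, ht⟩ := hpre
            have hL' : rep n ++ u' ∈ L := by
              apply hpc (rep n ++ u') t
              rw [List.append_assoc, ht]
              exact hL
            simp only [Function.comp_apply, phi_apply, if_pos rfl, tauS, if_pos hL']
            simp
        · have hL : rep n ++ u ∉ L := by
            rw [← hdfa, DFA.mem_accepts]
            show ¬ dfa.evalFrom dfa.start (rep n ++ u) ∈ dfa.accept
            rw [DFA.evalFrom_of_append]
            exact hacc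
          simp only [tauS, if_neg hL, if_neg hacc, Pi.zero_apply]
      · -- other terms vanish
        intro q _ hq
        by_cases hacc : dfa.evalFrom q u ∈ dfa.accept
        · rw [if_pos hacc]
          simp only [Pi.add_apply, phi_apply, if_neg (Ne.symm hq), list_sum_apply,
            List.map_map]
          have hzero : ((fun f : ℕ → M => f n) ∘ (fun u' => phi q (tauS L rep x u'))) = (fun _ : List A => (0 : M)) := by
            funext u'
            simp only [Function.comp_apply, phi_apply, if_neg (Ne.symm hq)]
          rw [hzero]
          simp
        · rw [if_neg hacc]; rfl
      · intro h; exact absurd (Finset.mem_univ _) h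
    rw [hdecomp]
    apply Submodule.sum_mem
    intro q _
    split_ifs with hacc
    · apply Submodule.add_mem _ (hphiy q)
      apply list_sum_mem
      intro z hz
      obtain ⟨u', hu', rfl⟩ := List.mem_map.mp hz
      exact hphiK q _ (hmemK u')
    · exact Submodule.zero_mem _
  have hle : Submodule.span R (SKernel L rep y) ≤ N := by
    rw [Submodule.span_le]
    rintro z ⟨u, rfl⟩
    exact key u
  -- conclude by Noetherianity
  letI : AddCommGroup M := Module.addCommMonoidToAddCommGroup R
  haveI : IsNoetherian R ↥N := isNoetherian_of_fg_of_noetherian N hNfg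
  have hfg := IsNoetherian.noetherian (Submodule.comap N.subtype (Submodule.span R (SKernel L rep y)))
  have hmap := hfg.map N.subtype
  rwa [Submodule.map_comap_subtype, inf_eq_right.mpr hle] at hmap
end

section
/- Let S = (L,A,<) be an abstract numeration system built on an infinite prefix-closed regular language L (accepted by a DFA with finitely many states). For any fixed word w ∈ A*, the sequence n ↦ |rep_S(n)|_w ∈ ℤ, counting the number of occurrences (with overlaps) of w as a factor of rep_S(n), is (ℤ,S)-regular. -/
open scoped Classical

/-- `countOcc w u` is the number of occurrences (with overlaps) of `w` as a factor
of `u`: the number of prefixes of `u` admitting `w` as a suffix. -/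
def countOcc {A : Type*} [DecidableEq A] (w u : List A) : ℕ :=
  u.inits.countP fun t => decide (w <:+ t)

section AuxOrder

variable {A : Type*} [Fintype A] [LinearOrder A]

lemma aux_radix_finite (L : Set (List A)) (b : List A) :
    {v | v ∈ L ∧ radixLt v b}.Finite := by
  apply (List.finite_length_le A b.length).subset
  rintro v ⟨-, h⟩
  rcases h with h | ⟨h, -⟩
  · exact le_of_lt h
  · exact le_of_eq h

lemma aux_valS_lt (L : Set (List A)) {a b : List A} (ha : a ∈ L) (hab : radixLt a b) :
    valS L a < valS L b := by
  haveI : IsTrichotomous A (· < ·) := ⟨fun a b h1 h2 => ((lt_trichotomy a b).resolve_left h1).resolve_right h2⟩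
  haveI : IsAsymm A (· < ·) := ⟨fun _ _ => lt_asymm⟩
  haveI : IsOrderConnected A (· < ·) :=
    ⟨fun a b c h => (lt_or_ge a b).imp id fun hba => lt_of_le_of_lt hba h⟩
  have hsub : {v | v ∈ L ∧ radixLt v a} ⊆ {v | v ∈ L ∧ radixLt v b} := by
    rintro v ⟨hv, hvb⟩
    refine ⟨hv, ?_⟩
    rcases hvb with h1 | ⟨h1, h1'⟩ <;> rcases hab with h2 | ⟨h2, h2'⟩
    · exact Or.inl (h1.trans h2)
    · exact Or.inl (h2 ▸ h1)
    · exact Or.inl (h1 ▸ h2)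
    · exact Or.inr ⟨h1.trans h2, List.lex_trans lt_trans h1' h2'⟩
  have hss : {v | v ∈ L ∧ radixLt v a} ⊂ {v | v ∈ L ∧ radixLt v b} := by
    refine (Set.ssubset_iff_of_subset hsub).mpr ⟨a, ⟨ha, hab⟩, fun hc => ?_⟩
    rcases hc.2 with h | ⟨-, h⟩
    · exact lt_irrefl _ h
    · exact asymm_of (List.Lex (· < ·)) h h
  exact Set.ncard_lt_ncard hss (aux_radix_finite L b)

lemma aux_rep_valS (L : Set (List A)) (rep : ℕ → List A)
    (hrep : ∀ n, rep n ∈ L) (hval : ∀ n, valS L (rep n) = n)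
    {v : List A} (hv : v ∈ L) : rep (valS L v) = v := by
  haveI : IsTrichotomous A (· < ·) := ⟨fun a b h1 h2 => ((lt_trichotomy a b).resolve_left h1).resolve_right h2⟩
  by_contra hne
  have htri : radixLt (rep (valS L v)) v ∨ radixLt v (rep (valS L v)) := by
    rcases Nat.lt_trichotomy (rep (valS L v)).length v.length with h | h | h
    · exact Or.inl (Or.inl h)
    · rcases trichotomous_of (List.Lex (· < ·)) (rep (valS L v)) v with h' | h' | h'
      · exact Or.inl (Or.inr ⟨h, h'⟩)
      · exact absurd h' hne
      · exact Or.inr (Or.inr ⟨h.symm, h'⟩)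
    · exact Or.inr (Or.inl h)
  rcases htri with h | h
  · have h2 := aux_valS_lt L (hrep _) h
    rw [hval] at h2
    exact lt_irrefl _ h2
  · have h2 := aux_valS_lt L hv h
    rw [hval] at h2
    exact lt_irrefl _ h2

end AuxOrder

section AuxCount

variable {A : Type*}

lemma aux_drop_eq_drop (v t' : List A) (k : ℕ) :
    List.drop ((v ++ t').length - k) (v ++ t') =
      List.drop ((v.drop (v.length - k) ++ t').length - k)
        (v.drop (v.length - k) ++ t') := by
  rw [List.drop_append, List.drop_append, List.drop_drop]
  simp only [List.length_append, List.length_drop]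
  congr 2 <;> omega

lemma aux_suffix_drop_iff (w v t' : List A) :
    w <:+ v ++ t' ↔ w <:+ v.drop (v.length - w.length) ++ t' := by
  constructor
  · intro h
    rw [List.suffix_iff_eq_drop] at h ⊢
    exact h.trans (aux_drop_eq_drop v t' w.length)
  · intro h
    refine h.trans ?_
    have hle : v.length - w.length ≤ v.length := Nat.sub_le _ _
    rw [← List.drop_append_of_le_length hle]
    exact List.drop_suffix _ _

lemma aux_countOcc_append [DecidableEq A] (w v u : List A) :
    countOcc w (v ++ u) = countOcc w v +
      u.inits.tail.countP
        (fun t' => decide (w <:+ v.drop (v.length - w.length) ++ t')) := by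
  unfold countOcc
  rw [List.inits_append, List.countP_append, List.countP_map]
  congr 1
  apply List.countP_congr
  intro t' _
  simp only [Function.comp_apply, decide_eq_true_eq]
  exact aux_suffix_drop_iff w v t'

end AuxCount

theorem statement17 {A : Type*} [Fintype A] [LinearOrder A] (L : Set (List A))
    (hinf : L.Infinite) (hpc : PrefixClosed L) (hreg : IsRegularLang L)
    (rep : ℕ → List A) (hrep : ∀ n, rep n ∈ L) (hval : ∀ n, valS L (rep n) = n)
    (w : List A) :
    (Submodule.span ℤ
      (SKernel L rep (fun n => (countOcc w (rep n) : ℤ)))).FG := by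
  classical
  obtain ⟨Q, hQ, dfa, hdfa⟩ := hreg
  haveI := hQ
  set x : ℕ → ℤ := fun n => (countOcc w (rep n) : ℤ) with hxdef
  -- the finite set of "tails"
  haveI : Finite ↥{t : List A | t.length ≤ w.length} :=
    (List.finite_length_le A w.length).to_subtype
  haveI : Fintype ↥{t : List A | t.length ≤ w.length} := Fintype.ofFinite _
  set I := Q × ↥{t : List A | t.length ≤ w.length} with hIdef
  have hrt : ∀ v : List A, v.drop (v.length - w.length) ∈ {t : List A | t.length ≤ w.length} := by
    intro v
    simp only [Set.mem_setOf_eq, List.length_drop]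
    omega
  set pairOf : ℕ → I := fun n =>
    (dfa.eval (rep n), ⟨(rep n).drop ((rep n).length - w.length), hrt (rep n)⟩) with hpairOf
  set g : I → (ℕ → ℤ) := fun p n => if pairOf n = p then x n else 0 with hg
  set h : I → (ℕ → ℤ) := fun p n => if pairOf n = p then 1 else 0 with hh
  set G : Set (ℕ → ℤ) := Set.range g ∪ Set.range h with hG
  have hGfin : G.Finite := (Set.finite_range g).union (Set.finite_range h)
  -- every kernel element lies in the span of G
  have key : SKernel L rep x ⊆ (Submodule.span ℤ G : Set (ℕ → ℤ)) := by
    rintro _ ⟨u, rfl⟩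
    set a : I → ℤ := fun p => if dfa.evalFrom p.1 u ∈ dfa.accept then 1 else 0 with ha
    set b : I → ℤ := fun p =>
      a p * (u.inits.tail.countP
        (fun t' => decide (w <:+ (p.2 : List A) ++ t')) : ℤ) with hb
    have htau : tauS L rep x u = ∑ p : I, (a p • g p + b p • h p) := by
      funext n
      have hsum : (∑ p : I, (a p • g p + b p • h p)) n
          = ∑ p : I, (a p • g p + b p • h p) n := by
        exact Finset.sum_apply n Finset.univ _
      rw [hsum]
      have hterm : ∀ p : I, (a p • g p + b p • h p) n
          = (if pairOf n = p then a p * x n + b p else 0) := by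
        intro p
        simp only [Pi.add_apply, Pi.smul_apply, smul_eq_mul, hg, hh]
        by_cases hp : pairOf n = p <;> simp [hp]
      simp only [hterm]
      rw [Finset.sum_ite_eq Finset.univ (pairOf n)
        (fun p => a p * x n + b p)]
      simp only [Finset.mem_univ, if_true]
      -- now a pointwise computation
      show tauS L rep x u n = a (pairOf n) * x n + b (pairOf n)
      have haval : a (pairOf n) = if rep n ++ u ∈ L then 1 else 0 := by
        have : rep n ++ u ∈ L ↔ dfa.evalFrom (dfa.eval (rep n)) u ∈ dfa.accept := by
          rw [← hdfa, DFA.mem_accepts, DFA.eval, DFA.evalFrom_of_append]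
        simp only [ha, hpairOf]
        by_cases hmem : rep n ++ u ∈ L
        · rw [if_pos (this.mp hmem), if_pos hmem]
        · rw [if_neg (fun hc => hmem (this.mpr hc)), if_neg hmem]
      by_cases hmem : rep n ++ u ∈ L
      · have hrv := aux_rep_valS L rep hrep hval hmem
        have ha1 : a (pairOf n) = 1 := by rw [haval, if_pos hmem]
        have hct := aux_countOcc_append w (rep n) u
        simp only [tauS, if_pos hmem, hb, ha1, one_mul, hxdef, hpairOf, hrv]
        push_cast [hct]
        have ha1' : a (dfa.eval (rep n), ⟨_, hrt (rep n)⟩) = 1 := ha1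
        rw [ha1', one_mul, one_mul]
      · have ha0 : a (pairOf n) = 0 := by rw [haval, if_neg hmem]
        simp only [tauS, if_neg hmem, hb, ha0, zero_mul, zero_add, add_zero, mul_zero]
    rw [htau]
    refine Submodule.sum_mem _ fun p _ => Submodule.add_mem _ ?_ ?_
    · exact Submodule.smul_mem _ _ (Submodule.subset_span (Or.inl ⟨p, rfl⟩))
    · exact Submodule.smul_mem _ _ (Submodule.subset_span (Or.inr ⟨p, rfl⟩))
  have hle : Submodule.span ℤ (SKernel L rep x) ≤ Submodule.span ℤ G :=
    Submodule.span_le.mpr key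
  have hGFG : (Submodule.span ℤ G).FG :=
    ⟨hGfin.toFinset, by rw [Set.Finite.coe_toFinset]⟩
  haveI := isNoetherian_of_fg_of_noetherian _ hGFG
  have hfg := IsNoetherian.noetherian
    (Submodule.comap (Submodule.span ℤ G).subtype (Submodule.span ℤ (SKernel L rep x)))
  have h2 := hfg.map (Submodule.span ℤ G).subtype
  rw [Submodule.map_comap_subtype, inf_eq_right.mpr hle] at h2
  exact h2
end

section
/- Let L be a prefix-closed language over a finite alphabet A, R a commutative ring, and d : A* → R a decoration such that the decorated tree T_d(L) is (R,h)-linear for some integer h ≥ 1. Let D = { v ∈ A* : |v| < h }, and for w ∈ L define the vector z(w) ∈ R^D by z(w)_v = d(wv) if wv ∈ L and z(w)_v = 0 otherwise. Then there exists a family of matrices M(D',a) ∈ R^{D×D}, indexed by sets D' ⊆ { v ∈ A* : |v| ≤ h } and letters a ∈ A, such that for every w ∈ L and every a ∈ A with wa ∈ L, the matrix-vector product M(D_h(w), a) · z(w) equals z(wa). -/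
open scoped Classical

/-- The tree `T(L)` decorated by `d` is `(R,h)`-linear: there is a family of
coefficients `c(D,u,v) ∈ R` such that for every `w ∈ L` and every `u` of length `h`
with `wu ∈ L`, the decoration `d(wu)` is the linear combination
`Σ_{|v| < h, wv ∈ L} c(D_h(w),u,v) • d(wv)`. -/
def IsLinear {A : Type*} (R : Type*) {M : Type*} [CommRing R] [AddCommMonoid M]
    [Module R M] (L : Set (List A)) (d : List A → M) (h : ℕ) : Prop :=
  ∃ c : Set (List A) → List A → List A → R,
    ∀ w ∈ L, ∀ u : List A, u.length = h → w ++ u ∈ L →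
      d (w ++ u) =
        ∑ᶠ v ∈ {v : List A | v.length < h ∧ w ++ v ∈ L},
          c (Dset L h w) u v • d (w ++ v)

theorem statement19 {A : Type*} [Fintype A] (L : Set (List A)) (hpc : PrefixClosed L)
    (R : Type*) [CommRing R] (d : List A → R)
    (h : ℕ) (hh : 1 ≤ h) (hlin : IsLinear R L d h) :
    ∃ Mm : Set (List A) → A →
        ({v : List A // v.length < h} → {v : List A // v.length < h} → R),
      ∀ w ∈ L, ∀ a : A, w ++ [a] ∈ L →
        ∀ u : {v : List A // v.length < h},
          (∑ᶠ v : {v : List A // v.length < h},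
              Mm (Dset L h w) a u v *
                (if w ++ v.1 ∈ L then d (w ++ v.1) else 0)) =
            (if (w ++ [a]) ++ u.1 ∈ L then d ((w ++ [a]) ++ u.1) else 0) := by
  classical
  obtain ⟨c, hc⟩ := hlin
  haveI : Finite {v : List A // v.length < h} := (List.finite_length_lt A h)
  haveI : Fintype {v : List A // v.length < h} := Fintype.ofFinite _
  refine ⟨fun D' a u v =>
    if u.1.length + 1 < h then (if v.1 = a :: u.1 then (1 : R) else 0)
    else (if (a :: u.1) ∈ D' then c D' (a :: u.1) v.1 else 0), ?_⟩
  intro w hw a ha u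
  have happ : (w ++ [a]) ++ u.1 = w ++ (a :: u.1) := by simp
  by_cases hcase : u.1.length + 1 < h
  · -- shallow case: the row is the indicator of a :: u
    simp only [hcase, if_true]
    rw [finsum_eq_sum_of_fintype]
    have hmem : (a :: u.1).length < h := by simpa using hcase
    rw [Finset.sum_eq_single (⟨a :: u.1, hmem⟩ : {v : List A // v.length < h})]
    · simp [happ]
    · intro b _ hb
      have : ¬ b.1 = a :: u.1 := fun hb' => hb (Subtype.ext hb')
      simp [this]
    · simp
  · -- deep case: |a :: u| = h
    have hlen : (a :: u.1).length = h := by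
      have := u.2; simp; omega
    simp only [hcase, if_false]
    by_cases hmemL : w ++ (a :: u.1) ∈ L
    · have hD : (a :: u.1) ∈ Dset L h w := ⟨le_of_eq hlen, hmemL⟩
      simp only [hD, if_true, happ, hmemL, if_true]
      rw [hc w hw (a :: u.1) hlen hmemL]
      set S : Set (List A) := {v : List A | v.length < h ∧ w ++ v ∈ L} with hS
      have hSfin : S.Finite := (List.finite_length_lt A h).subset (fun v hv => hv.1)
      rw [finsum_mem_eq_finite_toFinset_sum _ hSfin, finsum_eq_sum_of_fintype]
      have hTfin : ({v : List A | v.length < h}).Finite := List.finite_length_lt A h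
      have key : ∀ f : List A → R,
          (∑ i : {v : List A // v.length < h}, f i.1) = ∑ v ∈ hTfin.toFinset, f v :=
        fun f => (Finset.sum_subtype _ (fun x => by simp) f).symm
      simp only [mul_ite, mul_zero]
      rw [key (fun v => if w ++ v ∈ L then c (Dset L h w) (a :: u.1) v * d (w ++ v) else 0),
        ← Finset.sum_filter]
      have hfil : hTfin.toFinset.filter (fun v => w ++ v ∈ L) = hSfin.toFinset := by
        ext v; simp [hS, and_comm]
      rw [hfil]
      simp [smul_eq_mul]
    · have hD : (a :: u.1) ∉ Dset L h w := fun hD => hmemL hD.2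
      simp only [hD, if_false, happ, hmemL, if_false]
      simp
end
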